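/- Let w(ξ,τ) solve the scalar evolution equation w_τ − ∂_ξ^{−1}w + i|∂_ξ^{−1}w|² w = 0, where ∂_ξ^{−1}w(ξ,τ) = −∫_ξ^∞ w(ξ',τ) dξ'. Define u(ξ,τ) = (1/2) w(ξ,τ) exp(−(i/2)∫_ξ^∞ |w(ξ',τ)|² dξ') and v(ξ,τ) = −(i/2) ∂_ξ^{−1}w(ξ,τ) exp(−(i/2)∫_ξ^∞ |w(ξ',τ)|² dξ'). Then (u,v) solves the massive Thirring model in characteristic coordinates: i u_τ + v = 2|v|² u and −i v_ξ + u = 2|u|² v. -/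

import Mathlib

open MeasureTheory Complex Set
open scoped Real ENNReal

noncomputable section

/-- The antiderivative `∂_ξ^{−1} w(ξ,τ) = −∫_ξ^∞ w(ξ',τ) dξ'`. -/
def antiDeriv (w : ℝ → ℝ → ℂ) (ξ τ : ℝ) : ℂ := -∫ s in Set.Ioi ξ, w s τ

/-- `w` is a (classical) solution of the scalar form
`w_τ − ∂_ξ^{−1}w + i|∂_ξ^{−1}w|² w = 0` of the massive Thirring model in characteristic
coordinates, with `w(⬝,τ)` integrable. -/
def SolvesScalarMTM (w : ℝ → ℝ → ℂ) : Prop :=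
  (∀ τ : ℝ, Integrable (fun ξ => w ξ τ) volume) ∧
  ∀ ξ τ : ℝ, HasDerivAt (fun s => w ξ s)
    (antiDeriv w ξ τ - Complex.I * ((‖antiDeriv w ξ τ‖ ^ 2 : ℝ) : ℂ) * w ξ τ) τ

/-- `u(ξ,τ) = (1/2) w e^{−(i/2)∫_ξ^∞|w|²}`. -/
def MTMu (w : ℝ → ℝ → ℂ) (ξ τ : ℝ) : ℂ :=
  (1 / 2 : ℂ) * w ξ τ *
    Complex.exp (-(Complex.I / 2) * ((∫ s in Set.Ioi ξ, (‖w s τ‖ ^ 2 : ℝ) : ℝ) : ℂ))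

/-- `v(ξ,τ) = −(i/2) (∂_ξ^{−1}w) e^{−(i/2)∫_ξ^∞|w|²}`. -/
def MTMv (w : ℝ → ℝ → ℂ) (ξ τ : ℝ) : ℂ :=
  -(Complex.I / 2) * antiDeriv w ξ τ *
    Complex.exp (-(Complex.I / 2) * ((∫ s in Set.Ioi ξ, (‖w s τ‖ ^ 2 : ℝ) : ℝ) : ℂ))

/-! Write `A = ∂_ξ^{−1}w` and `Φ = ∫_ξ^∞ |w|²`, so that `u = w e^{−iΦ/2} / 2` and
`v = −i A e^{−iΦ/2} / 2`. Then `A_ξ = w` and `Φ_ξ = −|w|²`. Since the nonlinear term `i|A|²w` of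
the evolution equation is orthogonal to `w`, we get `∂_τ|w|² = 2⟪A, w⟫ = ∂_ξ|A|²`, and as `A`
vanishes at `+∞` this gives `Φ_τ = −|A|²`. The gauge factor `e^{−iΦ/2}` has modulus one, and with
these derivatives the product rule turns both Thirring equations into algebraic identities. -/

section IntegralIoi

variable {E : Type*} [NormedAddCommGroup E]

theorem hasDerivAt_integral_Ioi [NormedSpace ℝ E] [CompleteSpace E] {f : ℝ → E}
    (hf : Integrable f) {x : ℝ} (hfx : ContinuousAt f x) :
    HasDerivAt (fun y => ∫ t in Ioi y, f t) (-f x) x := by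
  have hsplit : (fun y => ∫ t in Ioi y, f t)
      = fun y => (∫ t in Ioi (0 : ℝ), f t) - ∫ t in (0 : ℝ)..y, f t := by
    funext y
    rw [← intervalIntegral.integral_Ioi_sub_Ioi' hf.integrableOn hf.integrableOn, sub_sub_cancel]
  rw [hsplit, ← zero_sub]
  exact (hasDerivAt_const x _).sub <| intervalIntegral.integral_hasDerivAt_right
    hf.intervalIntegrable hf.aestronglyMeasurable.stronglyMeasurableAtFilter hfx

theorem norm_integral_Ioi_le [NormedSpace ℝ E] {f : ℝ → E} (hf : Integrable f) (a : ℝ) :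
    ‖∫ t in Ioi a, f t‖ ≤ ∫ t, ‖f t‖ :=
  (norm_integral_le_integral_norm _).trans <|
    setIntegral_le_integral hf.norm (Filter.Eventually.of_forall fun _ => norm_nonneg _)

/-- Integrating `∂_y ‖∫_y^∞ f‖² = −2⟪∫_y^∞ f, f y⟫` over `(a, ∞)`. -/
theorem integral_Ioi_inner_integral_Ioi [InnerProductSpace ℝ E] [CompleteSpace E] {f : ℝ → E}
    (hf : Integrable f) (hc : Continuous f) (a : ℝ) :
    ∫ y in Ioi a, 2 * inner ℝ (∫ t in Ioi y, f t) (f y) = ‖∫ t in Ioi a, f t‖ ^ 2 := by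
  set F : ℝ → E := fun y => ∫ t in Ioi y, f t
  have hF : ∀ x, HasDerivAt F (-f x) x := fun x => hasDerivAt_integral_Ioi hf hc.continuousAt
  have hFc : Continuous F := continuous_iff_continuousAt.2 fun x => (hF x).continuousAt
  have hbound : ∀ y, ‖2 * inner ℝ (F y) (f y)‖ ≤ 2 * (∫ t, ‖f t‖) * ‖f y‖ := fun y => by
    rw [norm_mul, Real.norm_two, Real.norm_eq_abs, mul_assoc]
    gcongr
    exact (abs_real_inner_le_norm _ _).trans <|
      mul_le_mul_of_nonneg_right (norm_integral_Ioi_le hf y) (norm_nonneg _)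
  have hint : Integrable fun y => 2 * inner ℝ (F y) (f y) :=
    (hf.norm.const_mul _).mono' (continuous_const.mul (hFc.inner hc)).aestronglyMeasurable
      (Filter.Eventually.of_forall hbound)
  have hderiv : ∀ x ∈ Ici a, HasDerivAt (fun y => ‖F y‖ ^ 2) (-(2 * inner ℝ (F x) (f x))) x :=
    fun x _ => by simpa only [inner_neg_right, mul_neg] using (hF x).norm_sq
  have hlim : Filter.Tendsto (fun y => ‖F y‖ ^ 2) Filter.atTop (nhds 0) := by
    simpa using ((tendsto_integral_Ioi_zero (f := f) Filter.tendsto_id).norm.pow 2)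
  have := integral_Ioi_of_hasDerivAt_of_tendsto' hderiv hint.neg.integrableOn hlim
  rwa [integral_neg, zero_sub, neg_inj] at this

end IntegralIoi

section Substitution

variable {w : ℝ → ℝ → ℂ} {ξ τ : ℝ}

def MTMphase (w : ℝ → ℝ → ℂ) (ξ τ : ℝ) : ℝ := ∫ s in Ioi ξ, ‖w s τ‖ ^ 2

def MTMgauge (w : ℝ → ℝ → ℂ) (ξ τ : ℝ) : ℂ := exp (-(I / 2) * MTMphase w ξ τ)

theorem MTMu_eq : MTMu w ξ τ = 1 / 2 * w ξ τ * MTMgauge w ξ τ := rfl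

theorem MTMv_eq : MTMv w ξ τ = -(I / 2) * antiDeriv w ξ τ * MTMgauge w ξ τ := rfl

theorem norm_MTMgauge : ‖MTMgauge w ξ τ‖ = 1 := by
  simp [MTMgauge, Complex.norm_exp]

theorem norm_MTMu_sq : ‖MTMu w ξ τ‖ ^ 2 = ‖w ξ τ‖ ^ 2 / 4 := by
  rw [MTMu_eq, norm_mul, norm_mul, norm_MTMgauge]
  norm_num
  ring

theorem norm_MTMv_sq : ‖MTMv w ξ τ‖ ^ 2 = ‖antiDeriv w ξ τ‖ ^ 2 / 4 := by
  rw [MTMv_eq, norm_mul, norm_mul, norm_MTMgauge]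
  norm_num
  ring

theorem hasDerivAt_MTMgauge_left {φ' : ℝ} (h : HasDerivAt (fun y => MTMphase w y τ) φ' ξ) :
    HasDerivAt (fun y => MTMgauge w y τ) (MTMgauge w ξ τ * (-(I / 2) * φ')) ξ :=
  (h.ofReal_comp.const_mul _).cexp

theorem hasDerivAt_MTMgauge_right {φ' : ℝ} (h : HasDerivAt (fun s => MTMphase w ξ s) φ' τ) :
    HasDerivAt (fun s => MTMgauge w ξ s) (MTMgauge w ξ τ * (-(I / 2) * φ')) τ :=
  (h.ofReal_comp.const_mul _).cexp

theorem hasDerivAt_antiDeriv (hw : Integrable fun y => w y τ)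
    (hc : ContinuousAt (fun y => w y τ) ξ) :
    HasDerivAt (fun y => antiDeriv w y τ) (w ξ τ) ξ := by
  have h := (hasDerivAt_integral_Ioi hw hc).neg
  rw [neg_neg] at h
  exact h

theorem hasDerivAt_MTMphase_left (hw2 : Integrable fun y => ‖w y τ‖ ^ 2)
    (hc : ContinuousAt (fun y => w y τ) ξ) :
    HasDerivAt (fun y => MTMphase w y τ) (-‖w ξ τ‖ ^ 2) ξ :=
  hasDerivAt_integral_Ioi hw2 (hc.norm.pow 2)

theorem integral_Ioi_inner_antiDeriv (hw : Integrable fun y => w y τ)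
    (hc : Continuous fun y => w y τ) :
    ∫ y in Ioi ξ, 2 * inner ℝ (antiDeriv w y τ) (w y τ) = -‖antiDeriv w ξ τ‖ ^ 2 := by
  simpa only [antiDeriv, inner_neg_left, mul_neg, integral_neg, norm_neg, neg_inj]
    using integral_Ioi_inner_integral_Ioi hw hc ξ

theorem hasDerivAt_norm_sq_of_solvesScalarMTM (hsol : SolvesScalarMTM w) :
    HasDerivAt (fun s => ‖w ξ s‖ ^ 2) (2 * inner ℝ (antiDeriv w ξ τ) (w ξ τ)) τ := by
  convert (hsol.2 ξ τ).norm_sq using 2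
  simp only [Complex.inner, mul_re, sub_re, sub_im, mul_im, conj_re, conj_im, I_re, I_im,
    ofReal_re, ofReal_im]
  ring

theorem hasDerivAt_MTMphase_right (hsol : SolvesScalarMTM w) (hc : Continuous fun y => w y τ)
    (hInt : HasDerivAt (fun s => ∫ ξ' in Ioi ξ, ‖w ξ' s‖ ^ 2)
      (∫ ξ' in Ioi ξ, deriv (fun s' => ‖w ξ' s'‖ ^ 2) τ) τ) :
    HasDerivAt (fun s => MTMphase w ξ s) (-‖antiDeriv w ξ τ‖ ^ 2) τ := by
  have hderiv : (fun ξ' => deriv (fun s => ‖w ξ' s‖ ^ 2) τ)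
      = fun ξ' => 2 * inner ℝ (antiDeriv w ξ' τ) (w ξ' τ) :=
    funext fun _ => (hasDerivAt_norm_sq_of_solvesScalarMTM hsol).deriv
  rw [hderiv, integral_Ioi_inner_antiDeriv (hsol.1 τ) hc] at hInt
  exact hInt

theorem MTMu_thirring (hwτ : HasDerivAt (fun s => w ξ s)
      (antiDeriv w ξ τ - I * ((‖antiDeriv w ξ τ‖ ^ 2 : ℝ) : ℂ) * w ξ τ) τ)
    (hφτ : HasDerivAt (fun s => MTMphase w ξ s) (-‖antiDeriv w ξ τ‖ ^ 2) τ) :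
    I * deriv (fun s => MTMu w ξ s) τ + MTMv w ξ τ
      = 2 * ((‖MTMv w ξ τ‖ ^ 2 : ℝ) : ℂ) * MTMu w ξ τ := by
  have hu : HasDerivAt (fun s => MTMu w ξ s) _ τ :=
    ((hwτ.const_mul (1 / 2 : ℂ)).mul (hasDerivAt_MTMgauge_right hφτ)).congr_of_eventuallyEq
      (.of_forall fun _ => MTMu_eq)
  rw [hu.deriv, norm_MTMv_sq, MTMu_eq, MTMv_eq]
  push_cast
  linear_combination
    (-(((‖antiDeriv w ξ τ‖ : ℝ) : ℂ) ^ 2 * w ξ τ * MTMgauge w ξ τ) / 4) * I_sq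

theorem MTMv_thirring (hAξ : HasDerivAt (fun y => antiDeriv w y τ) (w ξ τ) ξ)
    (hφξ : HasDerivAt (fun y => MTMphase w y τ) (-‖w ξ τ‖ ^ 2) ξ) :
    -I * deriv (fun y => MTMv w y τ) ξ + MTMu w ξ τ
      = 2 * ((‖MTMu w ξ τ‖ ^ 2 : ℝ) : ℂ) * MTMv w ξ τ := by
  have hv : HasDerivAt (fun y => MTMv w y τ) _ ξ :=
    ((hAξ.const_mul (-(I / 2))).mul (hasDerivAt_MTMgauge_left hφξ)).congr_of_eventuallyEq
      (.of_forall fun _ => MTMv_eq)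
  rw [hv.deriv, norm_MTMu_sq, MTMu_eq, MTMv_eq]
  push_cast
  linear_combination (w ξ τ * MTMgauge w ξ τ / 2
    + I * antiDeriv w ξ τ * ((‖w ξ τ‖ : ℝ) : ℂ) ^ 2 * MTMgauge w ξ τ / 4) * I_sq

end Substitution

/-- If `w` solves the scalar equation `w_τ − ∂_ξ^{−1}w + i|∂_ξ^{−1}w|²w = 0`,
then the pair `(u,v)` obtained through the substitutions above solves the massive Thirring
model in characteristic coordinates: `i u_τ + v = 2|v|²u` and `−i v_ξ + u = 2|u|²v`. -/
theorem MTM_substitution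
    (w : ℝ → ℝ → ℂ)
    (hcont : Continuous (fun p : ℝ × ℝ => w p.1 p.2))
    (hw2 : ∀ τ : ℝ, Integrable (fun ξ => (‖w ξ τ‖ ^ 2 : ℝ)) volume)
    (hsol : SolvesScalarMTM w)
    (hInt : ∀ ξ τ : ℝ, HasDerivAt (fun s => ∫ ξ' in Set.Ioi ξ, (‖w ξ' s‖ ^ 2 : ℝ))
      (∫ ξ' in Set.Ioi ξ, deriv (fun s' => (‖w ξ' s'‖ ^ 2 : ℝ)) τ) τ) :
    ∀ ξ τ : ℝ,
      Complex.I * deriv (fun s => MTMu w ξ s) τ + MTMv w ξ τ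
        = 2 * ((‖MTMv w ξ τ‖ ^ 2 : ℝ) : ℂ) * MTMu w ξ τ ∧
      -Complex.I * deriv (fun y => MTMv w y τ) ξ + MTMu w ξ τ
        = 2 * ((‖MTMu w ξ τ‖ ^ 2 : ℝ) : ℂ) * MTMv w ξ τ := by
  intro ξ τ
  have hslice : Continuous fun y => w y τ := hcont.comp (continuous_id.prodMk continuous_const)
  exact ⟨MTMu_thirring (hsol.2 ξ τ) (hasDerivAt_MTMphase_right hsol hslice (hInt ξ τ)),
    MTMv_thirring (hasDerivAt_antiDeriv (hsol.1 τ) hslice.continuousAt)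
      (hasDerivAt_MTMphase_left (hw2 τ) hslice.continuousAt)⟩
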